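/- Let k ≥ 2 be an integer. Then p(r) tends to −∞ as r tends to 0 from the right, and p(r) tends to −∞ as r tends to 0 from the left. -/

import Mathlib

open Real MeasureTheory Set intervalIntegral Filter

noncomputable def Wfn (k : ℕ) (r t : ℝ) : ℝ :=
  (t * (t + r ^ 2) / (1 - t)) ^ ((1 : ℝ) / ((k : ℝ) + 1))

noncomputable def a₀ (k : ℕ) (r : ℝ) : ℝ :=
  -((k : ℝ) + 1) * ((k : ℝ) + 2) * r ^ 2 + 2 * (k : ℝ) * ((k : ℝ) + 2) * r - (k : ℝ) * ((k : ℝ) - 1)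

noncomputable def a₁ (k : ℕ) : ℝ := 2 * (2 * (k : ℝ) + 1)

noncomputable def periodP (k : ℕ) (r : ℝ) : ℝ :=
  |r| ^ (-(2 * (k : ℝ)) / ((k : ℝ) + 1)) *
    ∫ t in (0 : ℝ)..1, (a₀ k r - a₁ k * t) / Wfn k r t

lemma Wfn_meas (k : ℕ) (r : ℝ) :
    Measurable fun t : ℝ => (a₀ k r - a₁ k * t) / Wfn k r t := by
  unfold Wfn
  fun_prop

lemma integ (k : ℕ) (hk : 2 ≤ k) (r : ℝ) :
    IntervalIntegrable (fun t => (a₀ k r - a₁ k * t) / Wfn k r t) volume 0 1 := by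
  have hk' : (2:ℝ) ≤ (k:ℝ) := by exact_mod_cast hk
  set c : ℝ := 1 / ((k:ℝ) + 1) with hcdef
  have hc : (0:ℝ) < c := by rw [hcdef]; positivity
  have h2c : 2 * c < 1 := by
    rw [hcdef, mul_one_div, div_lt_one (by linarith)]; linarith
  set C : ℝ := |a₀ k r| + a₁ k with hCdef
  have ha₁ : (0:ℝ) ≤ a₁ k := by unfold a₁; positivity
  have hC : 0 ≤ C := by rw [hCdef]; positivity
  have hg : IntervalIntegrable (fun t : ℝ => C * t ^ (-(2*c))) volume 0 1 :=
    (intervalIntegrable_rpow' (by linarith)).const_mul C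
  rw [intervalIntegrable_iff_integrableOn_Ioc_of_le (by norm_num)] at hg ⊢
  refine hg.mono' (Wfn_meas k r).aestronglyMeasurable ?_
  rw [ae_restrict_iff' measurableSet_Ioc]
  filter_upwards with t ht
  have ht0 : 0 < t := ht.1
  rcases eq_or_lt_of_le ht.2 with h1 | h1
  · have hw0 : Wfn k r t = 0 := by
      rw [h1]; unfold Wfn; norm_num
      exact Real.zero_rpow (by positivity)
    simp only [hw0, div_zero, norm_zero]
    positivity
  · have h1t : (0:ℝ) < 1 - t := by linarith
    have hbase : (0:ℝ) < t * (t + r ^ 2) / (1 - t) := by positivity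
    have hW : (0:ℝ) < Wfn k r t := Real.rpow_pos_of_pos hbase _
    have htc : (0:ℝ) < t ^ (2*c) := Real.rpow_pos_of_pos ht0 _
    have hWge : t ^ (2*c) ≤ Wfn k r t := by
      have hb2 : t ^ (2:ℝ) ≤ t * (t + r ^ 2) / (1 - t) := by
        rw [le_div_iff₀ h1t, Real.rpow_two]
        nlinarith [sq_nonneg r, sq_nonneg t]
      calc t ^ (2*c) = (t ^ (2:ℝ)) ^ c := by
            rw [← Real.rpow_mul ht0.le]
          _ ≤ (t * (t + r ^ 2) / (1 - t)) ^ c :=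
            Real.rpow_le_rpow (Real.rpow_nonneg ht0.le _) hb2 hc.le
          _ = Wfn k r t := rfl
    have hnum : |a₀ k r - a₁ k * t| ≤ C := by
      calc |a₀ k r - a₁ k * t| ≤ |a₀ k r| + |a₁ k * t| := abs_sub _ _
        _ ≤ |a₀ k r| + a₁ k := by
            rw [abs_mul, abs_of_nonneg ha₁, abs_of_pos ht0]
            nlinarith
        _ = C := rfl
    have : ‖(a₀ k r - a₁ k * t) / Wfn k r t‖ = |a₀ k r - a₁ k * t| / Wfn k r t := by
      rw [Real.norm_eq_abs, abs_div, abs_of_pos hW]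
    rw [this]
    calc |a₀ k r - a₁ k * t| / Wfn k r t ≤ C / t ^ (2*c) :=
          div_le_div₀ hC hnum htc hWge
      _ = C * t ^ (-(2*c)) := by
          rw [Real.rpow_neg ht0.le, div_eq_mul_inv]

lemma numBound (k : ℕ) (hk : 2 ≤ k) (r t : ℝ) (ht0 : 0 ≤ t)
    (hr : 2 * (k:ℝ) * ((k:ℝ) + 2) * |r| ≤ 1) : a₀ k r - a₁ k * t ≤ -1 := by
  have hk' : (2:ℝ) ≤ (k:ℝ) := by exact_mod_cast hk
  have h1 : r ≤ |r| := le_abs_self r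
  have h2 : (0:ℝ) ≤ |r| := abs_nonneg r
  unfold a₀ a₁
  nlinarith [sq_nonneg r, mul_nonneg (mul_nonneg (by linarith : (0:ℝ) ≤ 2*(k:ℝ))
    (by linarith : (0:ℝ) ≤ (k:ℝ)+2)) (sub_nonneg.mpr h1),
    mul_nonneg (by linarith : (0:ℝ) ≤ 2*(2*(k:ℝ)+1)) ht0,
    mul_nonneg (mul_nonneg (by linarith : (0:ℝ) ≤ (k:ℝ)+1)
      (by linarith : (0:ℝ) ≤ (k:ℝ)+2)) (sq_nonneg r)]

lemma rsq_small (k : ℕ) (hk : 2 ≤ k) (r : ℝ)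
    (hr : 2 * (k:ℝ) * ((k:ℝ) + 2) * |r| ≤ 1) : r ^ 2 ≤ 1 / 4 := by
  have hk' : (2:ℝ) ≤ (k:ℝ) := by exact_mod_cast hk
  have h2 : (0:ℝ) ≤ |r| := abs_nonneg r
  have h16 : 16 * |r| ≤ 1 := by
    nlinarith [mul_nonneg (by nlinarith : (0:ℝ) ≤ 2*(k:ℝ)*((k:ℝ)+2) - 16) h2]
  have : r ^ 2 = |r| ^ 2 := (sq_abs r).symm
  nlinarith

lemma intBound (k : ℕ) (hk : 2 ≤ k) (r : ℝ)
    (hr : 2 * (k:ℝ) * ((k:ℝ) + 2) * |r| ≤ 1) :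
    (∫ t in (0:ℝ)..1, (a₀ k r - a₁ k * t) / Wfn k r t) ≤ -(1/4) := by
  have hc : (0:ℝ) < 1 / ((k:ℝ) + 1) := by positivity
  set f : ℝ → ℝ := fun t => (a₀ k r - a₁ k * t) / Wfn k r t with hf
  have hint : IntervalIntegrable f volume 0 1 := integ k hk r
  have hi1 : IntervalIntegrable f volume 0 (1/4) :=
    hint.mono_set (by rw [Set.uIcc_of_le, Set.uIcc_of_le] <;> first
      | exact Set.Icc_subset_Icc (le_refl _) (by norm_num) | norm_num)
  have hi2 : IntervalIntegrable f volume (1/4) (1/2) :=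
    hint.mono_set (by rw [Set.uIcc_of_le, Set.uIcc_of_le] <;> first
      | exact Set.Icc_subset_Icc (by norm_num) (by norm_num) | norm_num)
  have hi3 : IntervalIntegrable f volume (1/2) 1 :=
    hint.mono_set (by rw [Set.uIcc_of_le, Set.uIcc_of_le] <;> first
      | exact Set.Icc_subset_Icc (by norm_num) (le_refl _) | norm_num)
  have hfnonpos : ∀ t ∈ Set.Icc (0:ℝ) 1, f t ≤ 0 := by
    intro t ht
    have hnum : a₀ k r - a₁ k * t ≤ -1 := numBound k hk r t ht.1 hr
    rcases eq_or_lt_of_le ht.1 with h0 | h0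
    · have : Wfn k r t = 0 := by
        rw [← h0]; unfold Wfn; norm_num
        exact Real.zero_rpow (by positivity)
      simp [hf, this]
    rcases eq_or_lt_of_le ht.2 with h1 | h1
    · have : Wfn k r t = 0 := by
        rw [h1]; unfold Wfn; norm_num
        exact Real.zero_rpow (by positivity)
      simp [hf, this]
    · have h1t : (0:ℝ) < 1 - t := by linarith
      have hbase : (0:ℝ) < t * (t + r ^ 2) / (1 - t) := by positivity
      have hW : (0:ℝ) < Wfn k r t := Real.rpow_pos_of_pos hbase _
      exact div_nonpos_of_nonpos_of_nonneg (by linarith) hW.le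
  have hmid : ∀ t ∈ Set.Icc (1/4:ℝ) (1/2), f t ≤ -1 := by
    intro t ht
    have ht0 : (0:ℝ) < t := by linarith [ht.1]
    have h1t : (0:ℝ) < 1 - t := by linarith [ht.2]
    have hnum : a₀ k r - a₁ k * t ≤ -1 := numBound k hk r t ht0.le hr
    have hbase : (0:ℝ) < t * (t + r ^ 2) / (1 - t) := by positivity
    have hW : (0:ℝ) < Wfn k r t := Real.rpow_pos_of_pos hbase _
    have hrsq : r ^ 2 ≤ 1/4 := rsq_small k hk r hr
    have hbase1 : t * (t + r ^ 2) / (1 - t) ≤ 1 := by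
      rw [div_le_one h1t]
      nlinarith [ht.1, ht.2]
    have hW1 : Wfn k r t ≤ 1 := Real.rpow_le_one hbase.le hbase1 hc.le
    rw [hf]
    simp only
    rw [div_le_iff₀ hW]
    nlinarith
  have hI1 : (∫ t in (0:ℝ)..(1/4), f t) ≤ 0 := by
    have h0 : (∫ t in (0:ℝ)..(1/4), (0:ℝ)) = 0 := by simp
    calc (∫ t in (0:ℝ)..(1/4), f t) ≤ ∫ t in (0:ℝ)..(1/4), (0:ℝ) :=
          integral_mono_on (by norm_num) hi1 (intervalIntegrable_const)
            (fun t ht => hfnonpos t ⟨ht.1, by linarith [ht.2]⟩)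
      _ = 0 := h0
  have hI3 : (∫ t in (1/2:ℝ)..1, f t) ≤ 0 := by
    have h0 : (∫ t in (1/2:ℝ)..1, (0:ℝ)) = 0 := by simp
    calc (∫ t in (1/2:ℝ)..1, f t) ≤ ∫ t in (1/2:ℝ)..1, (0:ℝ) :=
          integral_mono_on (by norm_num) hi3 (intervalIntegrable_const)
            (fun t ht => hfnonpos t ⟨by linarith [ht.1], ht.2⟩)
      _ = 0 := h0
  have hI2 : (∫ t in (1/4:ℝ)..(1/2), f t) ≤ -(1/4) := by
    calc (∫ t in (1/4:ℝ)..(1/2), f t) ≤ ∫ t in (1/4:ℝ)..(1/2), (-1:ℝ) :=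
          integral_mono_on (by norm_num) hi2 (intervalIntegrable_const) hmid
      _ = -(1/4) := by simp; norm_num
  have hsplit : (∫ t in (0:ℝ)..1, f t) =
      (∫ t in (0:ℝ)..(1/4), f t) + ((∫ t in (1/4:ℝ)..(1/2), f t)
        + (∫ t in (1/2:ℝ)..1, f t)) := by
    rw [integral_add_adjacent_intervals hi2 hi3,
      integral_add_adjacent_intervals hi1 (hi2.trans hi3)]
  rw [hsplit]
  linarith

lemma pref_tendsto (k : ℕ) (hk : 2 ≤ k) :
    Tendsto (fun x : ℝ => x ^ (-(2 * (k:ℝ)) / ((k:ℝ) + 1))) (nhdsWithin 0 (Set.Ioi 0)) atTop := by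
  have hk' : (2:ℝ) ≤ (k:ℝ) := by exact_mod_cast hk
  set e : ℝ := 2 * (k:ℝ) / ((k:ℝ) + 1) with hedef
  have he : 0 < e := by rw [hedef]; positivity
  have h1 : Tendsto (fun x : ℝ => (x⁻¹) ^ e) (nhdsWithin 0 (Set.Ioi 0)) atTop :=
    (tendsto_rpow_atTop he).comp tendsto_inv_nhdsGT_zero
  refine h1.congr' ?_
  filter_upwards [self_mem_nhdsWithin] with x hx
  have hx0 : (0:ℝ) < x := hx
  rw [Real.inv_rpow hx0.le, ← Real.rpow_neg hx0.le, neg_div]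

theorem period_tendsto_atBot_zero (k : ℕ) (hk : 2 ≤ k) :
    Tendsto (periodP k) (nhdsWithin 0 (Set.Ioi 0)) atBot ∧
    Tendsto (periodP k) (nhdsWithin 0 (Set.Iio 0)) atBot := by
  have hk' : (2:ℝ) ≤ (k:ℝ) := by exact_mod_cast hk
  have hδ : (0:ℝ) < 1 / (2 * (k:ℝ) * ((k:ℝ) + 2)) := by positivity
  have hsmall : ∀ᶠ r in nhds (0:ℝ), 2 * (k:ℝ) * ((k:ℝ) + 2) * |r| ≤ 1 := by
    filter_upwards [Metric.ball_mem_nhds (0:ℝ) hδ] with r hrb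
    rw [Metric.mem_ball, Real.dist_eq, sub_zero] at hrb
    rw [← le_div_iff₀' (by positivity)]
    exact hrb.le
  have key : ∀ s : Set ℝ, (∀ r ∈ s, r ≠ 0) →
      Tendsto (fun r : ℝ => |r|) (nhdsWithin 0 s) (nhdsWithin 0 (Set.Ioi 0)) →
      Tendsto (periodP k) (nhdsWithin 0 s) atBot := by
    intro s hs habs
    have hpref : Tendsto (fun r : ℝ => |r| ^ (-(2 * (k:ℝ)) / ((k:ℝ) + 1)))
        (nhdsWithin 0 s) atTop := (pref_tendsto k hk).comp habs
    have hbound : Tendsto (fun r : ℝ =>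
        |r| ^ (-(2 * (k:ℝ)) / ((k:ℝ) + 1)) * -(1/4)) (nhdsWithin 0 s) atBot :=
      hpref.atTop_mul_const_of_neg (by norm_num)
    refine tendsto_atBot_mono' _ ?_ hbound
    filter_upwards [hsmall.filter_mono nhdsWithin_le_nhds] with r hr
    unfold periodP
    exact mul_le_mul_of_nonneg_left (intBound k hk r hr)
      (Real.rpow_nonneg (abs_nonneg r) _)
  constructor
  · refine key _ (fun r hr => ne_of_gt (Set.mem_Ioi.mp hr)) ?_
    refine tendsto_nhdsWithin_of_tendsto_nhds_of_eventually_within _ ?_ ?_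
    · exact (continuous_abs.tendsto' 0 0 abs_zero).mono_left nhdsWithin_le_nhds
    · filter_upwards [self_mem_nhdsWithin] with r hr
      exact Set.mem_Ioi.mpr (abs_pos.mpr (ne_of_gt (Set.mem_Ioi.mp hr)))
  · refine key _ (fun r hr => ne_of_lt (Set.mem_Iio.mp hr)) ?_
    refine tendsto_nhdsWithin_of_tendsto_nhds_of_eventually_within _ ?_ ?_
    · exact (continuous_abs.tendsto' 0 0 abs_zero).mono_left nhdsWithin_le_nhds
    · filter_upwards [self_mem_nhdsWithin] with r hr
      exact Set.mem_Ioi.mpr (abs_pos.mpr (ne_of_lt (Set.mem_Iio.mp hr)))
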